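/- (Lemma 2.5, second inequality.) For all integers j, k ≥ 1 there exists c = c(k,j) > 0 such that for every Schwartz function f : ℝ → ℂ, ‖⟨x⟩^k ∂_x^j f‖₂² ≤ c ‖⟨x⟩^{k-1} ∂_x^{j+1} f‖₂ · ‖⟨x⟩^{k+1} ∂_x^{j-1} f‖₂ + c ‖⟨x⟩^{k-1} ∂_x^{j-1} f‖₂². -/

import Mathlib

/-! Write `g = ∂^{j-1} f` and `I = ‖⟨x⟩^k g'‖₂²`. Integrating by parts against `g` for the real
inner product (on `ℂ`, `⟪a, b⟫ = Re (a * conj b)`) gives `I = -∫ ⟪(⟨x⟩^{2k} g')', g⟫`.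
Since `|(⟨x⟩^{2k})'| = 2k |x| ⟨x⟩^{2k-2} ≤ 2k ⟨x⟩^{2k-1}`, Cauchy–Schwarz gives
`I ≤ 2k √I ‖⟨x⟩^{k-1} g‖₂ + ‖⟨x⟩^{k-1} g''‖₂ ‖⟨x⟩^{k+1} g‖₂`, and the first term is absorbed
into the left-hand side by AM–GM. -/

open MeasureTheory SchwartzMap

section L2

variable {α E F : Type*} [MeasurableSpace α] {μ : Measure α} [NormedAddCommGroup E]
  [NormedAddCommGroup F] {f : α → E} {g : α → F}

theorem MeasureTheory.MemLp.integrable_norm_mul_norm (hf : MemLp f 2 μ) (hg : MemLp g 2 μ) :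
    Integrable (fun a => ‖f a‖ * ‖g a‖) μ :=
  hf.norm.integrable_mul hg.norm

theorem MeasureTheory.integral_norm_mul_norm_le_sqrt_mul_sqrt (hf : MemLp f 2 μ)
    (hg : MemLp g 2 μ) :
    ∫ a, ‖f a‖ * ‖g a‖ ∂μ ≤ √(∫ a, ‖f a‖ ^ 2 ∂μ) * √(∫ a, ‖g a‖ ^ 2 ∂μ) := by
  have := integral_mul_le_Lp_mul_Lq_of_nonneg Real.HolderConjugate.two_two
    (.of_forall fun a => norm_nonneg (f a)) (.of_forall fun a => norm_nonneg (g a))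
    (by simpa using hf.norm) (by simpa using hg.norm)
  simpa [Real.sqrt_eq_rpow] using this

end L2

theorem SchwartzMap.coe_derivCLM_iterate {F : Type*} [NormedAddCommGroup F] [NormedSpace ℝ F]
    (n : ℕ) (f : 𝓢(ℝ, F)) : ⇑((derivCLM ℝ F)^[n] f) = iteratedDeriv n f := by
  induction n with
  | zero => rfl
  | succ n ih => rw [Function.iterate_succ_apply', iteratedDeriv_succ, ← ih]; rfl

theorem hasTemperateGrowth_sqrt_one_add_sq_pow (m : ℕ) :
    (fun x : ℝ => √(1 + x ^ 2) ^ m).HasTemperateGrowth := by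
  have h : (fun x : ℝ => √(1 + x ^ 2) ^ m) = fun x => ((1 + ‖x‖ ^ 2) ^ (1 / 2 : ℝ)) ^ m := by
    ext x
    rw [Real.sqrt_eq_rpow, Real.norm_eq_abs, sq_abs]
  rw [h]
  exact (Function.hasTemperateGrowth_one_add_norm_sq_rpow ℝ _).pow m

section WeightedNorm

variable {E : Type*} [NormedAddCommGroup E] [InnerProductSpace ℝ E]

theorem SchwartzMap.memLp_sqrt_one_add_sq_pow_smul (m : ℕ) (g : 𝓢(ℝ, E)) :
    MemLp (fun x => (√(1 + x ^ 2) ^ m) • g x) 2 := by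
  have h := (smulLeftCLM E (fun x : ℝ => √(1 + x ^ 2) ^ m) g).memLp 2
  rwa [smulLeftCLM_apply (hasTemperateGrowth_sqrt_one_add_sq_pow m)] at h

noncomputable def weightedNormSq (m : ℕ) (h : ℝ → E) : ℝ :=
  ∫ x, ‖(√(1 + x ^ 2) ^ m : ℝ) • h x‖ ^ 2

theorem weightedNormSq_nonneg (m : ℕ) (h : ℝ → E) : 0 ≤ weightedNormSq m h :=
  integral_nonneg fun _ => by positivity

theorem hasDerivAt_one_add_sq_pow_smul (k : ℕ) {h : ℝ → E} {h' : E} {x : ℝ}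
    (hh : HasDerivAt h h' x) :
    HasDerivAt (fun y => (1 + y ^ 2) ^ k • h y)
      ((k * (1 + x ^ 2) ^ (k - 1) * (2 * x)) • h x + (1 + x ^ 2) ^ k • h') x := by
  have hw := ((hasDerivAt_pow 2 x).const_add 1).pow k
  convert hw.smul hh using 1
  · rfl
  · simp [add_comm]

theorem weightedNormSq_deriv_eq_neg_integral_inner (k : ℕ) (g : 𝓢(ℝ, E)) :
    weightedNormSq k (deriv g) = -∫ x : ℝ, inner ℝ
      ((k * (1 + x ^ 2) ^ (k - 1) * (2 * x)) • deriv g x + (1 + x ^ 2) ^ k • deriv (deriv g) x)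
      (g x) := by
  set u := smulLeftCLM E (fun y : ℝ => (1 + y ^ 2) ^ k) (derivCLM ℝ E g)
  have hu : ⇑u = fun y => (1 + y ^ 2) ^ k • deriv g y := by
    ext y
    have hw : (fun y : ℝ => (1 + y ^ 2) ^ k).HasTemperateGrowth := by fun_prop
    simp [u, smulLeftCLM_apply_apply hw]
  have hu' : deriv u = fun x : ℝ =>
      (k * (1 + x ^ 2) ^ (k - 1) * (2 * x)) • deriv g x + (1 + x ^ 2) ^ k • deriv (deriv g) x := by
    ext x
    rw [hu]
    exact (hasDerivAt_one_add_sq_pow_smul k ((derivCLM ℝ E g).hasDerivAt x)).deriv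
  have ibp := integral_bilinear_deriv_right_eq_neg_left u g (innerSL ℝ)
  rw [hu'] at ibp
  refine (integral_congr_ae (.of_forall fun x => ?_)).trans ibp
  show _ = inner ℝ (u x) _
  rw [hu, real_inner_smul_left, real_inner_self_eq_norm_sq, norm_smul, mul_pow, Real.norm_eq_abs,
    abs_of_nonneg (by positivity), ← pow_mul, mul_comm k 2, pow_mul, Real.sq_sqrt (by positivity)]

theorem abs_inner_deriv_one_add_sq_pow_smul_le (k : ℕ) (hk : 1 ≤ k) (x : ℝ) (a b c : E) :
    |inner ℝ ((k * (1 + x ^ 2) ^ (k - 1) * (2 * x)) • a + (1 + x ^ 2) ^ k • b) c| ≤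
      2 * k * (‖(√(1 + x ^ 2) ^ k) • a‖ * ‖(√(1 + x ^ 2) ^ (k - 1)) • c‖) +
        ‖(√(1 + x ^ 2) ^ (k - 1)) • b‖ * ‖(√(1 + x ^ 2) ^ (k + 1)) • c‖ := by
  obtain ⟨n, rfl⟩ : ∃ n, k = n + 1 := ⟨k - 1, by omega⟩
  have hx : |x| ≤ √(1 + x ^ 2) := Real.abs_le_sqrt (by nlinarith)
  have hs2 : 1 + x ^ 2 = √(1 + x ^ 2) ^ 2 := (Real.sq_sqrt (by positivity)).symm
  set s := √(1 + x ^ 2)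
  have hs : 0 ≤ s := Real.sqrt_nonneg _
  rw [hs2]
  simp only [Nat.add_sub_cancel, norm_smul, Real.norm_eq_abs, abs_of_nonneg (pow_nonneg hs _)]
  have ha : |(↑(n + 1) * (s ^ 2) ^ n * (2 * x))| ≤ 2 * (n + 1) * (s ^ (n + 1) * s ^ n) := by
    rw [abs_mul, abs_mul, abs_mul, abs_of_nonneg (by positivity : (0:ℝ) ≤ (s ^ 2) ^ n)]
    calc _ ≤ |(↑(n + 1) : ℝ)| * (s ^ 2) ^ n * (|2| * s) := by gcongr
      _ = _ := by push_cast; rw [abs_of_nonneg (by positivity)]; ring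
  calc _ ≤ ‖(↑(n + 1) * (s ^ 2) ^ n * (2 * x)) • a + (s ^ 2) ^ (n + 1) • b‖ * ‖c‖ :=
        abs_real_inner_le_norm _ _
    _ ≤ (|↑(n + 1) * (s ^ 2) ^ n * (2 * x)| * ‖a‖ + (s ^ 2) ^ (n + 1) * ‖b‖) * ‖c‖ := by
        gcongr
        refine (norm_add_le _ _).trans ?_
        rw [norm_smul, norm_smul, Real.norm_eq_abs, Real.norm_eq_abs,
          abs_of_nonneg (by positivity : (0:ℝ) ≤ (s ^ 2) ^ (n + 1))]
    _ ≤ (2 * (n + 1) * (s ^ (n + 1) * s ^ n) * ‖a‖ + (s ^ 2) ^ (n + 1) * ‖b‖) * ‖c‖ := by gcongr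
    _ = _ := by push_cast; ring

theorem weightedNormSq_deriv_le (k : ℕ) (hk : 1 ≤ k) (g : 𝓢(ℝ, E)) :
    weightedNormSq k (deriv g) ≤
      2 * √(weightedNormSq (k - 1) (deriv (deriv g))) * √(weightedNormSq (k + 1) g) +
        4 * k ^ 2 * weightedNormSq (k - 1) g := by
  have hLp (m : ℕ) (h : 𝓢(ℝ, E)) := h.memLp_sqrt_one_add_sq_pow_smul m
  let g' := derivCLM ℝ E g
  let g'' := derivCLM ℝ E g'
  have hA := (hLp k g').integrable_norm_mul_norm (hLp (k - 1) g)
  have hB := (hLp (k - 1) g'').integrable_norm_mul_norm (hLp (k + 1) g)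
  have hIBP : weightedNormSq k (deriv g) ≤
      2 * k * (√(weightedNormSq k (deriv g)) * √(weightedNormSq (k - 1) g)) +
        √(weightedNormSq (k - 1) (deriv (deriv g))) * √(weightedNormSq (k + 1) g) := by
    conv_lhs => rw [weightedNormSq_deriv_eq_neg_integral_inner]
    calc _ ≤ ∫ x : ℝ, |inner ℝ ((k * (1 + x ^ 2) ^ (k - 1) * (2 * x)) • deriv g x +
            (1 + x ^ 2) ^ k • deriv (deriv g) x) (g x)| :=
          (neg_le_abs _).trans abs_integral_le_integral_abs
      _ ≤ ∫ x : ℝ, 2 * k * (‖(√(1 + x ^ 2) ^ k) • g' x‖ * ‖(√(1 + x ^ 2) ^ (k - 1)) • g x‖) +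
            ‖(√(1 + x ^ 2) ^ (k - 1)) • g'' x‖ * ‖(√(1 + x ^ 2) ^ (k + 1)) • g x‖ :=
          integral_mono_of_nonneg (.of_forall fun _ => abs_nonneg _) ((hA.const_mul _).add hB)
            (.of_forall fun x => abs_inner_deriv_one_add_sq_pow_smul_le k hk x _ _ _)
      _ = 2 * k * (∫ x : ℝ, ‖(√(1 + x ^ 2) ^ k) • g' x‖ * ‖(√(1 + x ^ 2) ^ (k - 1)) • g x‖) +
            ∫ x : ℝ, ‖(√(1 + x ^ 2) ^ (k - 1)) • g'' x‖ * ‖(√(1 + x ^ 2) ^ (k + 1)) • g x‖ := by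
          rw [integral_add (hA.const_mul _) hB, integral_const_mul]
      _ ≤ _ := by
          gcongr
          · exact integral_norm_mul_norm_le_sqrt_mul_sqrt (hLp k g') (hLp (k - 1) g)
          · exact integral_norm_mul_norm_le_sqrt_mul_sqrt (hLp (k - 1) g'') (hLp (k + 1) g)
  -- `2k √I √C ≤ I / 2 + 2k² C`
  have hI := Real.sq_sqrt (weightedNormSq_nonneg k (deriv g))
  have hC := Real.sq_sqrt (weightedNormSq_nonneg (k - 1) g)
  nlinarith [sq_nonneg (√(weightedNormSq k (deriv g)) - 2 * k * √(weightedNormSq (k - 1) g))]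

end WeightedNorm

/-- **Lemma 2.5, second inequality.** For integers `j, k ≥ 1` there is `c = c(k,j) > 0`
such that for every Schwartz `f`,
`‖⟨x⟩^k ∂_x^j f‖₂² ≤ c ‖⟨x⟩^{k-1} ∂_x^{j+1} f‖₂ ‖⟨x⟩^{k+1} ∂_x^{j-1} f‖₂ + c ‖⟨x⟩^{k-1} ∂_x^{j-1} f‖₂²`. -/
theorem weighted_interpolation_by_parts_second (j k : ℕ) (hj : 1 ≤ j) (hk : 1 ≤ k) :
    ∃ c : ℝ, 0 < c ∧ ∀ f : SchwartzMap ℝ ℂ,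
      (∫ x : ℝ, ‖(Real.sqrt (1 + x ^ 2) ^ k : ℝ) • iteratedDeriv j (⇑f) x‖ ^ 2) ≤
        c * Real.sqrt (∫ x : ℝ,
            ‖(Real.sqrt (1 + x ^ 2) ^ (k - 1) : ℝ) • iteratedDeriv (j + 1) (⇑f) x‖ ^ 2) *
          Real.sqrt (∫ x : ℝ,
            ‖(Real.sqrt (1 + x ^ 2) ^ (k + 1) : ℝ) • iteratedDeriv (j - 1) (⇑f) x‖ ^ 2) +
        c * ∫ x : ℝ,
          ‖(Real.sqrt (1 + x ^ 2) ^ (k - 1) : ℝ) • iteratedDeriv (j - 1) (⇑f) x‖ ^ 2 := by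
  refine ⟨4 * k ^ 2 + 2, by positivity, fun f => ?_⟩
  obtain ⟨n, rfl⟩ : ∃ n, j = n + 1 := ⟨j - 1, by omega⟩
  set g := (derivCLM ℝ ℂ)^[n] f
  have hg : iteratedDeriv n f = g := (coe_derivCLM_iterate n f).symm
  simp only [iteratedDeriv_succ, hg, Nat.add_sub_cancel]
  change weightedNormSq k (deriv g) ≤
    _ * √(weightedNormSq (k - 1) (deriv (deriv g))) * √(weightedNormSq (k + 1) g) +
      _ * weightedNormSq (k - 1) g
  have hC := weightedNormSq_nonneg (k - 1) g
  refine (weightedNormSq_deriv_le k hk g).trans ?_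
  gcongr <;> linarith [sq_nonneg (k : ℝ)]
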